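/- Let k be a field and X a type; in F := FreeLieAlgebra k (X ⊕ X), with plain generators x̄ and dotted generators ẋ, let φ : F → F be the unique Lie algebra homomorphism with φ(x̄) = x̄ and φ(ẋ) = x̄. Let V₂ be the smallest k-submodule of F containing all ẋ and closed under the two di-algebra operations (for a, b ∈ V₂: ⁅φ(a), b⁆ ∈ V₂ and ⁅a, φ(b)⁆ ∈ V₂). Let S ⊆ V₂ and let J be the smallest k-submodule of F containing S such that for all j ∈ J and v ∈ V₂ one has ⁅φ(v), j⁆ ∈ J, ⁅j, φ(v)⁆ ∈ J, ⁅v, φ(j)⁆ ∈ J, and ⁅φ(j), v⁆ ∈ J. Then J equals the intersection (as submodules of F) of V₂ with the Lie ideal of F generated by S ∪ φ(S). -/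

import Mathlib

/-!
Grade `F` by the number of dotted generators, using the Lie homomorphism `F → k[t] ⊗ F` with
`x̄ ↦ 1 ⊗ x̄` and `ẋ ↦ t ⊗ ẋ` (a polynomial variable rather than a scalar, so that no
characteristic assumption is needed). Then `V₂` lies in degree `1` and `φ(F)` in degree `0`.

Let `I` be the Lie ideal generated by `S ∪ φ(S)`. Since `φ(I) ⊆ I`, both `I` and `V₂` are stable
under the di-algebra operations with `V₂` and contain `S`, so `J ⊆ V₂ ∩ I`. Conversely, `φ(J) + J + (I in degrees ≥ 2)` is stable under bracketing with
`ẋ` and with `x̄ = φ(ẋ)`, so it is a Lie ideal containing `S ∪ φ(S)` and hence contains `I`;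
its degree-one component is `J`, and every element of `V₂ ∩ I` equals its degree-one component.
-/

open scoped TensorProduct

section Dialgebra

variable {R L : Type*} [CommRing R] [LieRing L] [LieAlgebra R L] (φ : L →ₗ⁅R⁆ L)

def IsDiClosed (W : Submodule R L) : Prop :=
  ∀ a b : L, a ∈ W → b ∈ W → ⁅φ a, b⁆ ∈ W ∧ ⁅a, φ b⁆ ∈ W

def IsDiIdeal (V J : Submodule R L) : Prop :=
  ∀ j ∈ J, ∀ v ∈ V, ⁅φ v, j⁆ ∈ J ∧ ⁅j, φ v⁆ ∈ J ∧ ⁅v, φ j⁆ ∈ J ∧ ⁅φ j, v⁆ ∈ J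

variable {φ}

theorem isDiClosed_sInf {𝒲 : Set (Submodule R L)} (h : ∀ W ∈ 𝒲, IsDiClosed φ W) :
    IsDiClosed φ (sInf 𝒲) := fun a b ha hb =>
  ⟨Submodule.mem_sInf.2 fun W hW =>
      (h W hW a b (Submodule.mem_sInf.1 ha W hW) (Submodule.mem_sInf.1 hb W hW)).1,
    Submodule.mem_sInf.2 fun W hW =>
      (h W hW a b (Submodule.mem_sInf.1 ha W hW) (Submodule.mem_sInf.1 hb W hW)).2⟩

theorem isDiIdeal_sInf {V : Submodule R L} {𝒥 : Set (Submodule R L)}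
    (h : ∀ J ∈ 𝒥, IsDiIdeal φ V J) : IsDiIdeal φ V (sInf 𝒥) := fun j hj v hv => by
  have hJ : ∀ J ∈ 𝒥, _ := fun J hJ => h J hJ j (Submodule.mem_sInf.1 hj J hJ) v hv
  exact ⟨Submodule.mem_sInf.2 fun J hJ' => (hJ J hJ').1,
    Submodule.mem_sInf.2 fun J hJ' => (hJ J hJ').2.1,
    Submodule.mem_sInf.2 fun J hJ' => (hJ J hJ').2.2.1,
    Submodule.mem_sInf.2 fun J hJ' => (hJ J hJ').2.2.2⟩

theorem IsDiClosed.isDiIdeal_self {V : Submodule R L} (hV : IsDiClosed φ V) :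
    IsDiIdeal φ V V := fun j hj v hv =>
  ⟨(hV v j hv hj).1, (hV j v hj hv).2, (hV v j hv hj).2, (hV j v hj hv).1⟩

theorem isDiIdeal_lieIdeal (V : Submodule R L) {I : LieIdeal R L} (hI : ∀ a ∈ I, φ a ∈ I) :
    IsDiIdeal φ V I.toSubmodule := fun j hj v _ =>
  ⟨I.lie_mem hj, by rw [← lie_skew]; exact I.neg_mem (I.lie_mem hj),
    I.lie_mem (hI j hj), by rw [← lie_skew]; exact I.neg_mem (I.lie_mem (hI j hj))⟩

theorem apply_mem_lieSpan_union_image (hφ : ∀ a, φ (φ a) = φ a) {S : Set L} {a : L}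
    (ha : a ∈ LieSubmodule.lieSpan R L (S ∪ φ '' S)) :
    φ a ∈ LieSubmodule.lieSpan R L (S ∪ φ '' S) := by
  suffices h : LieSubmodule.lieSpan R L (S ∪ φ '' S) ≤
      LieIdeal.comap φ (LieSubmodule.lieSpan R L (S ∪ φ '' S)) from h ha
  refine LieSubmodule.lieSpan_le.2 ?_
  rintro _ (hs | ⟨s, hs, rfl⟩)
  · exact LieSubmodule.subset_lieSpan (Or.inr ⟨_, hs, rfl⟩)
  · rw [SetLike.mem_coe, LieIdeal.mem_comap, hφ]
    exact LieSubmodule.subset_lieSpan (Or.inr ⟨s, hs, rfl⟩)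

end Dialgebra

namespace FreeLieAlgebra

variable {R Y Z L : Type*} [CommRing R] [LieRing L] [LieAlgebra R L]

theorem hom_mem_of_forall_of_mem (f : FreeLieAlgebra R Z →ₗ⁅R⁆ L) {A : LieSubalgebra R L}
    (h : ∀ z, f (of R z) ∈ A) (a : FreeLieAlgebra R Z) : f a ∈ A := by
  have hf : f = A.incl.comp (lift R fun z => ⟨f (of R z), h z⟩) :=
    hom_ext fun z => by simp [lift_of_apply]
  rw [hf]
  exact Subtype.property _

theorem lie_mem_of_forall_of_lie_mem {K : Submodule R (FreeLieAlgebra R Y)}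
    (h : ∀ y : Y, ∀ m ∈ K, ⁅of R y, m⁆ ∈ K) (x : FreeLieAlgebra R Y) {m : FreeLieAlgebra R Y}
    (hm : m ∈ K) : ⁅x, m⁆ ∈ K := by
  let A : LieSubalgebra R (FreeLieAlgebra R Y) :=
    { carrier := {x | ∀ m ∈ K, ⁅x, m⁆ ∈ K}
      add_mem' := fun ha hb m hm => by rw [add_lie]; exact K.add_mem (ha m hm) (hb m hm)
      zero_mem' := fun m _ => by rw [zero_lie]; exact K.zero_mem
      smul_mem' := fun c _ ha m hm => by rw [smul_lie]; exact K.smul_mem c (ha m hm)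
      lie_mem' := fun ha hb m hm => by
        rw [lie_lie]; exact K.sub_mem (ha _ (hb m hm)) (hb _ (ha m hm)) }
  exact hom_mem_of_forall_of_mem LieHom.id (A := A) h x m hm

theorem lieSpan_le_of_forall_of_lie_mem {s : Set (FreeLieAlgebra R Y)}
    {K : Submodule R (FreeLieAlgebra R Y)} (hs : s ⊆ K) (h : ∀ y : Y, ∀ m ∈ K, ⁅of R y, m⁆ ∈ K) :
    (LieSubmodule.lieSpan R (FreeLieAlgebra R Y) s).toSubmodule ≤ K :=
  LieSubmodule.lieSpan_le (N := { K with lie_mem := lie_mem_of_forall_of_lie_mem h _ }).2 hs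

variable (R) in
noncomputable def gradingHom (w : Y → ℕ) :
    FreeLieAlgebra R Y →ₗ⁅R⁆ Polynomial R ⊗[R] FreeLieAlgebra R Y :=
  lift R fun y => (Polynomial.X ^ w y : Polynomial R) ⊗ₜ of R y

variable (R) in
noncomputable def homogeneousSubmodule (w : Y → ℕ) (n : ℕ) : Submodule R (FreeLieAlgebra R Y) :=
  LinearMap.eqLocus (gradingHom R w).toLinearMap
    (TensorProduct.mk R (Polynomial R) (FreeLieAlgebra R Y) (Polynomial.X ^ n))

theorem mem_homogeneousSubmodule {w : Y → ℕ} {n : ℕ} {a : FreeLieAlgebra R Y} :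
    a ∈ homogeneousSubmodule R w n ↔ gradingHom R w a = (Polynomial.X ^ n : Polynomial R) ⊗ₜ a :=
  Iff.rfl

theorem of_mem_homogeneousSubmodule (w : Y → ℕ) (y : Y) :
    of R y ∈ homogeneousSubmodule R w (w y) :=
  lift_of_apply _ y

theorem lie_mem_homogeneousSubmodule {w : Y → ℕ} {m n : ℕ} {a b : FreeLieAlgebra R Y}
    (ha : a ∈ homogeneousSubmodule R w m) (hb : b ∈ homogeneousSubmodule R w n) :
    ⁅a, b⁆ ∈ homogeneousSubmodule R w (m + n) := by
  rw [mem_homogeneousSubmodule] at ha hb ⊢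
  rw [LieHom.map_lie, ha, hb, LieAlgebra.ExtendScalars.bracket_tmul, pow_add]

variable (R) in
noncomputable def homogeneousSubalgebraZero (w : Y → ℕ) : LieSubalgebra R (FreeLieAlgebra R Y) :=
  { homogeneousSubmodule R w 0 with
    lie_mem' := fun ha hb => (add_zero 0 ▸ lie_mem_homogeneousSubmodule ha hb :) }

theorem hom_mem_homogeneousSubmodule_zero {w : Y → ℕ}
    (f : FreeLieAlgebra R Z →ₗ⁅R⁆ FreeLieAlgebra R Y)
    (h : ∀ z, f (of R z) ∈ homogeneousSubmodule R w 0) (a : FreeLieAlgebra R Z) :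
    f a ∈ homogeneousSubmodule R w 0 :=
  hom_mem_of_forall_of_mem f (A := homogeneousSubalgebraZero R w) h a

variable (R) in
noncomputable def homogeneousComponent (w : Y → ℕ) (n : ℕ) :
    FreeLieAlgebra R Y →ₗ[R] FreeLieAlgebra R Y :=
  (TensorProduct.lid R _).toLinearMap ∘ₗ (Polynomial.lcoeff R n).rTensor _ ∘ₗ
    (gradingHom R w).toLinearMap

theorem homogeneousComponent_of_mem {w : Y → ℕ} {m n : ℕ} {a : FreeLieAlgebra R Y}
    (ha : a ∈ homogeneousSubmodule R w m) :
    homogeneousComponent R w n a = if n = m then a else 0 := by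
  simp only [homogeneousComponent, LinearMap.comp_apply, LieHom.coe_toLinearMap,
    mem_homogeneousSubmodule.1 ha, LinearMap.rTensor_tmul, LinearEquiv.coe_toLinearMap,
    TensorProduct.lid_tmul, Polynomial.lcoeff_apply, Polynomial.coeff_X_pow]
  split_ifs <;> simp

theorem homogeneousComponent_of_mem_self {w : Y → ℕ} {n : ℕ} {a : FreeLieAlgebra R Y}
    (ha : a ∈ homogeneousSubmodule R w n) : homogeneousComponent R w n a = a := by
  rw [homogeneousComponent_of_mem ha, if_pos rfl]

theorem homogeneousComponent_of_mem_of_ne {w : Y → ℕ} {m n : ℕ} {a : FreeLieAlgebra R Y}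
    (ha : a ∈ homogeneousSubmodule R w m) (hmn : n ≠ m) : homogeneousComponent R w n a = 0 := by
  rw [homogeneousComponent_of_mem ha, if_neg hmn]

theorem lie_mem_iSup_inf_homogeneousSubmodule {w : Y → ℕ} {m d : ℕ}
    (I : LieIdeal R (FreeLieAlgebra R Y)) {g x : FreeLieAlgebra R Y}
    (hg : g ∈ homogeneousSubmodule R w m)
    (hx : x ∈ ⨆ n, I.toSubmodule ⊓ homogeneousSubmodule R w (n + d)) :
    ⁅g, x⁆ ∈ ⨆ n, I.toSubmodule ⊓ homogeneousSubmodule R w (n + d) := by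
  refine Submodule.iSup_induction _ (motive := fun x => ⁅g, x⁆ ∈ _) hx ?_ ?_ ?_
  · rintro n x ⟨hxI, hxn⟩
    have hgx := lie_mem_homogeneousSubmodule hg hxn
    rw [← add_assoc] at hgx
    exact Submodule.mem_iSup_of_mem (m + n) ⟨I.lie_mem hxI, hgx⟩
  · simp
  · intro x y hx hy
    rw [lie_add]
    exact Submodule.add_mem _ hx hy

section Extension

variable {w : Y → ℕ} {φ : FreeLieAlgebra R Y →ₗ⁅R⁆ FreeLieAlgebra R Y}
  {V J : Submodule R (FreeLieAlgebra R Y)} {I : LieIdeal R (FreeLieAlgebra R Y)}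

variable (w φ) in
/-- Graded by `w`, this is `φ(J)` in degree `0`, `J` in degree `1` and `I` in degrees `≥ 2`. -/
noncomputable def diIdealExtension (J : Submodule R (FreeLieAlgebra R Y))
    (I : LieIdeal R (FreeLieAlgebra R Y)) : Submodule R (FreeLieAlgebra R Y) :=
  J.map φ.toLinearMap ⊔ J ⊔ ⨆ n, I.toSubmodule ⊓ homogeneousSubmodule R w (n + 2)

theorem homogeneousComponent_one_mem_of_mem_diIdealExtension
    (hφ0 : ∀ a, φ a ∈ homogeneousSubmodule R w 0) (hJ1 : J ≤ homogeneousSubmodule R w 1)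
    {a : FreeLieAlgebra R Y} (ha : a ∈ diIdealExtension w φ J I) :
    homogeneousComponent R w 1 a ∈ J := by
  suffices h : diIdealExtension w φ J I ≤ J.comap (homogeneousComponent R w 1) from h ha
  refine sup_le (sup_le ?_ ?_) (iSup_le fun n => ?_)
  · rintro _ ⟨j, -, rfl⟩
    rw [Submodule.mem_comap, LieHom.coe_toLinearMap,
      homogeneousComponent_of_mem_of_ne (hφ0 j) one_ne_zero]
    exact J.zero_mem
  · intro j hj
    rwa [Submodule.mem_comap, homogeneousComponent_of_mem_self (hJ1 hj)]
  · rintro x ⟨-, hx⟩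
    rw [Submodule.mem_comap, homogeneousComponent_of_mem_of_ne hx (by omega)]
    exact J.zero_mem

theorem lie_mem_diIdealExtension (hφφ : ∀ a, φ (φ a) = φ a)
    (hφ0 : ∀ a, φ a ∈ homogeneousSubmodule R w 0) (hV1 : V ≤ homogeneousSubmodule R w 1)
    (hJ1 : J ≤ homogeneousSubmodule R w 1) (hJI : J ≤ I.toSubmodule) (hJ : IsDiIdeal φ V J)
    {v m : FreeLieAlgebra R Y} (hv : v ∈ V) (hm : m ∈ diIdealExtension w φ J I) :
    ⁅φ v, m⁆ ∈ diIdealExtension w φ J I ∧ ⁅v, m⁆ ∈ diIdealExtension w φ J I := by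
  have of_mem_map {a} (ha : a ∈ J) : φ a ∈ diIdealExtension w φ J I :=
    Submodule.mem_sup_left (Submodule.mem_sup_left ⟨a, ha, rfl⟩)
  have of_mem {a} (ha : a ∈ J) : a ∈ diIdealExtension w φ J I :=
    Submodule.mem_sup_left (Submodule.mem_sup_right ha)
  have of_mem_iSup {a} (ha : a ∈ ⨆ n, I.toSubmodule ⊓ homogeneousSubmodule R w (n + 2)) :
      a ∈ diIdealExtension w φ J I :=
    Submodule.mem_sup_right ha
  obtain ⟨_, hy, x, hx, rfl⟩ := Submodule.mem_sup.1 hm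
  obtain ⟨_, ⟨j₀, hj₀, rfl⟩, j₁, hj₁, rfl⟩ := Submodule.mem_sup.1 hy
  simp only [LieHom.coe_toLinearMap, lie_add]
  have hdeg2 : ⁅v, j₁⁆ ∈ homogeneousSubmodule R w (1 + 1) :=
    lie_mem_homogeneousSubmodule (hV1 hv) (hJ1 hj₁)
  refine ⟨add_mem (add_mem ?_ (of_mem (hJ j₁ hj₁ v hv).1)) ?_,
    add_mem (add_mem (of_mem (hJ j₀ hj₀ v hv).2.2.1) ?_) ?_⟩
  · rw [← hφφ j₀, ← φ.map_lie]
    exact of_mem_map (hJ j₀ hj₀ v hv).2.2.1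
  · exact of_mem_iSup (lie_mem_iSup_inf_homogeneousSubmodule I (hφ0 v) hx)
  · exact of_mem_iSup (Submodule.mem_iSup_of_mem 0 ⟨I.lie_mem (hJI hj₁), hdeg2⟩)
  · exact of_mem_iSup (lie_mem_iSup_inf_homogeneousSubmodule I (hV1 hv) hx)

end Extension

section Dotted

variable {X : Type*} {w : X ⊕ X → ℕ}
  {φ : FreeLieAlgebra R (X ⊕ X) →ₗ⁅R⁆ FreeLieAlgebra R (X ⊕ X)}
  {V J : Submodule R (FreeLieAlgebra R (X ⊕ X))}

theorem lieSpan_le_diIdealExtension (hφr : ∀ x : X, φ (of R (Sum.inr x)) = of R (Sum.inl x))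
    (hφφ : ∀ a, φ (φ a) = φ a) (hφ0 : ∀ a, φ a ∈ homogeneousSubmodule R w 0)
    (hdot : ∀ x : X, of R (Sum.inr x) ∈ V) (hV1 : V ≤ homogeneousSubmodule R w 1)
    (hJ1 : J ≤ homogeneousSubmodule R w 1) (hJ : IsDiIdeal φ V J)
    {S : Set (FreeLieAlgebra R (X ⊕ X))} (hSJ : S ⊆ J)
    (hJI : J ≤ (LieSubmodule.lieSpan R (FreeLieAlgebra R (X ⊕ X)) (S ∪ φ '' S)).toSubmodule) :
    (LieSubmodule.lieSpan R (FreeLieAlgebra R (X ⊕ X)) (S ∪ φ '' S)).toSubmodule ≤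
      diIdealExtension w φ J (LieSubmodule.lieSpan R (FreeLieAlgebra R (X ⊕ X)) (S ∪ φ '' S)) := by
  refine lieSpan_le_of_forall_of_lie_mem ?_ ?_
  · rintro _ (hs | ⟨s, hs, rfl⟩)
    · exact Submodule.mem_sup_left (Submodule.mem_sup_right (hSJ hs))
    · exact Submodule.mem_sup_left (Submodule.mem_sup_left ⟨s, hSJ hs, rfl⟩)
  · rintro (x | x) m hm
    · rw [← hφr x]
      exact (lie_mem_diIdealExtension hφφ hφ0 hV1 hJ1 hJI hJ (hdot x) hm).1
    · exact (lie_mem_diIdealExtension hφφ hφ0 hV1 hJ1 hJI hJ (hdot x) hm).2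

theorem inf_lieSpan_le (hφr : ∀ x : X, φ (of R (Sum.inr x)) = of R (Sum.inl x))
    (hφφ : ∀ a, φ (φ a) = φ a) (hφ0 : ∀ a, φ a ∈ homogeneousSubmodule R w 0)
    (hdot : ∀ x : X, of R (Sum.inr x) ∈ V) (hV1 : V ≤ homogeneousSubmodule R w 1)
    (hJV : J ≤ V) (hJ : IsDiIdeal φ V J) {S : Set (FreeLieAlgebra R (X ⊕ X))} (hSJ : S ⊆ J)
    (hJI : J ≤ (LieSubmodule.lieSpan R (FreeLieAlgebra R (X ⊕ X)) (S ∪ φ '' S)).toSubmodule) :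
    V ⊓ (LieSubmodule.lieSpan R (FreeLieAlgebra R (X ⊕ X)) (S ∪ φ '' S)).toSubmodule ≤ J := by
  rintro a ⟨haV, haI⟩
  have hJ1 := hJV.trans hV1
  rw [← homogeneousComponent_of_mem_self (hV1 haV)]
  exact homogeneousComponent_one_mem_of_mem_diIdealExtension hφ0 hJ1
    (lieSpan_le_diIdealExtension hφr hφφ hφ0 hdot hV1 hJ1 hJ hSJ hJI haI)

def dotCount : X ⊕ X → ℕ := Sum.elim 0 1

theorem apply_apply_eq_apply (hφl : ∀ x : X, φ (of R (Sum.inl x)) = of R (Sum.inl x))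
    (hφr : ∀ x : X, φ (of R (Sum.inr x)) = of R (Sum.inl x)) (a : FreeLieAlgebra R (X ⊕ X)) :
    φ (φ a) = φ a := by
  have hcomp : φ.comp φ = φ := hom_ext <| by rintro (x | x) <;> simp [hφl, hφr]
  exact LieHom.congr_fun hcomp a

theorem apply_mem_homogeneousSubmodule_dotCount_zero
    (hφl : ∀ x : X, φ (of R (Sum.inl x)) = of R (Sum.inl x))
    (hφr : ∀ x : X, φ (of R (Sum.inr x)) = of R (Sum.inl x)) (a : FreeLieAlgebra R (X ⊕ X)) :
    φ a ∈ homogeneousSubmodule R dotCount 0 :=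
  hom_mem_homogeneousSubmodule_zero φ (by
    rintro (x | x) <;> simp only [hφl, hφr] <;> exact of_mem_homogeneousSubmodule _ (Sum.inl x)) a

theorem isDiClosed_homogeneousSubmodule_dotCount_one
    (hφ0 : ∀ a, φ a ∈ homogeneousSubmodule R dotCount 0) :
    IsDiClosed φ (homogeneousSubmodule R dotCount 1) := by
  intro a b ha hb
  have hab := lie_mem_homogeneousSubmodule (hφ0 a) hb
  have hba := lie_mem_homogeneousSubmodule ha (hφ0 b)
  rw [zero_add] at hab
  exact ⟨hab, hba⟩

end Dotted

end FreeLieAlgebra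

/-- For a subset `S` of the free Leibniz algebra `V₂` (the closure of the dotted
generators in `FreeLieAlgebra k (X ⊕ X)` under the two di-algebra operations), the di-algebra
ideal of `V₂` generated by `S` equals the intersection of `V₂` with the Lie ideal of the ambient
free Lie algebra generated by `S ∪ φ(S)`. -/
theorem dialgebra_ideal_eq_inter (k : Type*) [Field k] (X : Type*)
    (φ : FreeLieAlgebra k (X ⊕ X) →ₗ⁅k⁆ FreeLieAlgebra k (X ⊕ X))
    (hφl : ∀ x : X, φ (FreeLieAlgebra.of k (Sum.inl x)) = FreeLieAlgebra.of k (Sum.inl x))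
    (hφr : ∀ x : X, φ (FreeLieAlgebra.of k (Sum.inr x)) = FreeLieAlgebra.of k (Sum.inl x))
    (V₂ : Submodule k (FreeLieAlgebra k (X ⊕ X)))
    (hV₂ : V₂ = sInf {W : Submodule k (FreeLieAlgebra k (X ⊕ X)) |
        (∀ x : X, FreeLieAlgebra.of k (Sum.inr x) ∈ W) ∧
        ∀ a b : FreeLieAlgebra k (X ⊕ X), a ∈ W → b ∈ W → ⁅φ a, b⁆ ∈ W ∧ ⁅a, φ b⁆ ∈ W})
    (S : Set (FreeLieAlgebra k (X ⊕ X))) (hS : S ⊆ (V₂ : Set (FreeLieAlgebra k (X ⊕ X)))) :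
    sInf {J : Submodule k (FreeLieAlgebra k (X ⊕ X)) |
        S ⊆ (J : Set (FreeLieAlgebra k (X ⊕ X))) ∧
        ∀ j ∈ J, ∀ v ∈ V₂, ⁅φ v, j⁆ ∈ J ∧ ⁅j, φ v⁆ ∈ J ∧ ⁅v, φ j⁆ ∈ J ∧ ⁅φ j, v⁆ ∈ J} =
      V₂ ⊓
        LieSubmodule.toSubmodule
          (LieSubmodule.lieSpan k (FreeLieAlgebra k (X ⊕ X)) (S ∪ φ '' S)) := by
  have hφφ := FreeLieAlgebra.apply_apply_eq_apply hφl hφr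
  have hφ0 := FreeLieAlgebra.apply_mem_homogeneousSubmodule_dotCount_zero hφl hφr
  have hV₂closed : IsDiClosed φ V₂ := hV₂ ▸ isDiClosed_sInf fun W hW => hW.2
  have hdot : ∀ x : X, FreeLieAlgebra.of k (Sum.inr x) ∈ V₂ := fun x =>
    hV₂ ▸ Submodule.mem_sInf.2 fun W hW => hW.1 x
  have hV₂one : V₂ ≤ FreeLieAlgebra.homogeneousSubmodule k FreeLieAlgebra.dotCount 1 :=
    hV₂ ▸ sInf_le ⟨fun x => FreeLieAlgebra.of_mem_homogeneousSubmodule _ (Sum.inr x),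
      FreeLieAlgebra.isDiClosed_homogeneousSubmodule_dotCount_one hφ0⟩
  set J := sInf {J : Submodule k (FreeLieAlgebra k (X ⊕ X)) | S ⊆ J ∧ IsDiIdeal φ V₂ J}
  have hSJ : S ⊆ J := fun s hs => Submodule.mem_sInf.2 fun W hW => hW.1 hs
  have hJ : IsDiIdeal φ V₂ J := isDiIdeal_sInf fun W hW => hW.2
  have hJV₂ : J ≤ V₂ := sInf_le ⟨hS, hV₂closed.isDiIdeal_self⟩
  have hJI : J ≤ (LieSubmodule.lieSpan k _ (S ∪ φ '' S)).toSubmodule :=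
    sInf_le ⟨fun s hs => LieSubmodule.subset_lieSpan (Or.inl hs),
      isDiIdeal_lieIdeal V₂ fun _ => apply_mem_lieSpan_union_image hφφ⟩
  exact le_antisymm (le_inf hJV₂ hJI)
    (FreeLieAlgebra.inf_lieSpan_le hφr hφφ hφ0 hdot hV₂one hJV₂ hJ hSJ hJI)
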